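/- For each fixed nonnegative integer i, integer j ≥ 1, and every nonnegative integer n, the identity \sum_{k=0}^{i} q^{2k} \frac{(q^{j-1};q)_k}{(q;q)_k} \left( \sum_{\lambda=0}^{n} q^{\lambda} \frac{(q^{j+i};q)_{\lambda}}{(q^{1+i};q)_{\lambda}} \frac{1-q^{1+i+\lambda-k}}{1-q^{1+i+\lambda}} \right) = \frac{(q^{1+j};q)_{n+i}}{(q;q)_{n+i}} \cdot \frac{1-q^{1+n}}{1-q^{1+n+i}} holds. -/

import Mathlib

/-!
Since `k ≤ i < N := 1 + i + λ`, the weight splits as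
`q^{2k} (1 - q^{N-k}) / (1 - q^N) = q^k - q^k (1 - q^k) / (1 - q^N)`,
so the double sum becomes `A T₀ - B T₁` with four single sums, two over `k` and two over `λ`.
Each of them telescopes to a ratio of q-shifted factorials, and with `b = q^{1+i}` the
combination collapses to the right-hand side. Of `a = q^{j-1}` the argument uses only
`aq ≠ 1` and `q^{j+i} = a b`, so it is carried out for arbitrary such `a`.
-/

/-- The q-shifted factorial `(a;q)_n = ∏_{m<n} (1 - a q^m)`. -/
noncomputable def qPoch (q a : ℝ) (n : ℕ) : ℝ := ∏ m ∈ Finset.range n, (1 - a * q ^ m)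

open Finset

section Basic

variable (q : ℝ)

theorem qPoch_zero (a : ℝ) : qPoch q a 0 = 1 :=
  prod_range_zero _

theorem qPoch_succ (a : ℝ) (n : ℕ) : qPoch q a (n + 1) = qPoch q a n * (1 - a * q ^ n) :=
  prod_range_succ _ _

theorem qPoch_succ' (a : ℝ) (n : ℕ) : qPoch q a (n + 1) = (1 - a) * qPoch q (a * q) n := by
  simp only [qPoch, prod_range_succ', pow_zero, mul_one, pow_succ', mul_left_comm, mul_comm,
    mul_assoc]

theorem qPoch_add (a : ℝ) (m n : ℕ) :
    qPoch q a (m + n) = qPoch q a m * qPoch q (a * q ^ m) n := by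
  simp only [qPoch, prod_range_add, pow_add, mul_assoc]

variable {q}

theorem qPoch_pos (hq0 : 0 ≤ q) (hq1 : q ≤ 1) {a : ℝ} (ha : a < 1) (n : ℕ) :
    0 < qPoch q a n := by
  refine prod_pos fun m _ => ?_
  have h0 : 0 ≤ q ^ m := pow_nonneg hq0 m
  have h1 : q ^ m ≤ 1 := pow_le_one₀ hq0 hq1
  rcases le_or_gt 0 a with ha0 | ha0 <;> nlinarith

end Basic

section Sums

variable {q : ℝ}

theorem sum_pow_mul_qPoch_div_qPoch (a : ℝ) {i : ℕ} (hi : qPoch q q i ≠ 0) :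
    ∑ k ∈ range (i + 1), q ^ k * qPoch q a k / qPoch q q k = qPoch q (a * q) i / qPoch q q i := by
  induction i with
  | zero => simp [qPoch_zero]
  | succ i ih =>
    rw [qPoch_succ] at hi
    obtain ⟨hi, hqi⟩ := mul_ne_zero_iff.mp hi
    rw [sum_range_succ, ih hi, qPoch_succ q q, qPoch_succ q (a * q), qPoch_succ' q a]
    field_simp
    ring

theorem one_sub_mul_sum_pow_mul_one_sub_pow_mul_qPoch_div_qPoch (a : ℝ) {i : ℕ}
    (hi : qPoch q q i ≠ 0) :
    (1 - a * q) * ∑ k ∈ range (i + 1), q ^ k * (1 - q ^ k) * qPoch q a k / qPoch q q k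
      = q * (1 - a) * (1 - q ^ i) * qPoch q (a * q) i / qPoch q q i := by
  induction i with
  | zero => simp [qPoch_zero]
  | succ i ih =>
    rw [qPoch_succ] at hi
    obtain ⟨hi, hqi⟩ := mul_ne_zero_iff.mp hi
    rw [sum_range_succ, mul_add, ih hi, qPoch_succ q q, qPoch_succ q (a * q), qPoch_succ' q a]
    field_simp
    ring

theorem sub_mul_sum_pow_mul_qPoch_div_qPoch (b c : ℝ) {N : ℕ} (hN : qPoch q b N ≠ 0) :
    (b - c * q) * ∑ l ∈ range N, q ^ l * qPoch q c l / qPoch q b l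
      = qPoch q c N * (q - b * q ^ N) / qPoch q b N - (q - b) := by
  induction N with
  | zero => simp [qPoch_zero]
  | succ N ih =>
    rw [qPoch_succ] at hN
    obtain ⟨hN, hbN⟩ := mul_ne_zero_iff.mp hN
    rw [sum_range_succ, mul_add, ih hN, qPoch_succ q b, qPoch_succ q c]
    field_simp
    ring

theorem sub_mul_sum_pow_mul_qPoch_div_qPoch_succ (b c : ℝ) {N : ℕ} (hN : qPoch q b N ≠ 0) :
    (b - c) * ∑ l ∈ range N, q ^ l * qPoch q c l / qPoch q b (l + 1)
      = qPoch q c N / qPoch q b N - 1 := by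
  induction N with
  | zero => simp [qPoch_zero]
  | succ N ih =>
    rw [qPoch_succ] at hN
    obtain ⟨hN, hbN⟩ := mul_ne_zero_iff.mp hN
    rw [sum_range_succ, mul_add, ih hN, qPoch_succ q b, qPoch_succ q c]
    field_simp
    ring

end Sums

theorem one_sub_mul_qPoch_add (q x : ℝ) (i n : ℕ) :
    (1 - x) * qPoch q (x * q) (n + i) = qPoch q x i * qPoch q (x * q ^ i) (n + 1) := by
  rw [← qPoch_succ', ← qPoch_add, Nat.add_right_comm, add_comm]

theorem qPoch_add_mul_one_sub (q x : ℝ) (i n : ℕ) :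
    qPoch q x (n + i) * (1 - x * q ^ (n + i)) = qPoch q x i * qPoch q (x * q ^ i) (n + 1) := by
  rw [← qPoch_succ, ← qPoch_add, Nat.add_right_comm, add_comm]

theorem pow_two_mul_mul_one_sub_pow_sub_div (q : ℝ) {k N : ℕ} (hkN : k ≤ N) (hN : 1 - q ^ N ≠ 0) :
    q ^ (2 * k) * ((1 - q ^ (N - k)) / (1 - q ^ N)) = q ^ k - q ^ k * (1 - q ^ k) / (1 - q ^ N) := by
  have hsplit : q ^ N = q ^ (N - k) * q ^ k := by rw [← pow_add, Nat.sub_add_cancel hkN]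
  field_simp
  rw [hsplit]
  ring

theorem double_sum_qPoch_eq_sub {q : ℝ} (hq0 : 0 ≤ q) (hq1 : q < 1) (a c : ℝ) (i n : ℕ) :
    ∑ k ∈ range (i + 1), q ^ (2 * k) * qPoch q a k / qPoch q q k *
        (∑ l ∈ range (n + 1), q ^ l * qPoch q c l / qPoch q (q ^ (1 + i)) l *
          ((1 - q ^ (1 + i + l - k)) / (1 - q ^ (1 + i + l))))
      = (∑ k ∈ range (i + 1), q ^ k * qPoch q a k / qPoch q q k) *
          (∑ l ∈ range (n + 1), q ^ l * qPoch q c l / qPoch q (q ^ (1 + i)) l)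
        - (∑ k ∈ range (i + 1), q ^ k * (1 - q ^ k) * qPoch q a k / qPoch q q k) *
          (∑ l ∈ range (n + 1), q ^ l * qPoch q c l / qPoch q (q ^ (1 + i)) (l + 1)) := by
  rw [sum_mul, sum_mul, ← sum_sub_distrib]
  refine sum_congr rfl fun k hk => ?_
  rw [mul_sum, mul_sum, mul_sum, ← sum_sub_distrib]
  refine sum_congr rfl fun l _ => ?_
  have hkl : k ≤ 1 + i + l := by rw [mem_range] at hk; omega
  have hw := pow_two_mul_mul_one_sub_pow_sub_div q hkl
    (sub_ne_zero.mpr (pow_lt_one₀ hq0 hq1 (by omega)).ne')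
  rw [qPoch_succ, ← div_div, pow_add q (1 + i)]
  rw [pow_add q (1 + i)] at hw
  linear_combination q ^ l * qPoch q c l / qPoch q (q ^ (1 + i)) l * qPoch q a k / qPoch q q k * hw

theorem double_sum_qPoch_eq {q : ℝ} (hq : 0 < q) (hq1 : q < 1) (a : ℝ) (haq : a * q ≠ 1)
    (i n : ℕ) :
    ∑ k ∈ range (i + 1), q ^ (2 * k) * qPoch q a k / qPoch q q k *
        (∑ l ∈ range (n + 1), q ^ l * qPoch q (a * q ^ (1 + i)) l / qPoch q (q ^ (1 + i)) l *
          ((1 - q ^ (1 + i + l - k)) / (1 - q ^ (1 + i + l))))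
      = qPoch q (a * q ^ 2) (n + i) / qPoch q q (n + i) *
          ((1 - q ^ (1 + n)) / (1 - q ^ (1 + n + i))) := by
  rw [double_sum_qPoch_eq_sub hq.le hq1]
  set b := q ^ (1 + i) with hb
  set A := ∑ k ∈ range (i + 1), q ^ k * qPoch q a k / qPoch q q k
  set B := ∑ k ∈ range (i + 1), q ^ k * (1 - q ^ k) * qPoch q a k / qPoch q q k
  set T₀ := ∑ l ∈ range (n + 1), q ^ l * qPoch q (a * b) l / qPoch q b l
  set T₁ := ∑ l ∈ range (n + 1), q ^ l * qPoch q (a * b) l / qPoch q b (l + 1)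
  have hqi : qPoch q q i ≠ 0 := (qPoch_pos hq.le hq1.le hq1 i).ne'
  have hbn : qPoch q b (n + 1) ≠ 0 :=
    (qPoch_pos hq.le hq1.le (pow_lt_one₀ hq.le hq1 (by omega)) _).ne'
  have haq' : 1 - a * q ≠ 0 := sub_ne_zero.mpr haq.symm
  have hni : 1 - q ^ (1 + n + i) ≠ 0 := sub_ne_zero.mpr (pow_lt_one₀ hq.le hq1 (by omega)).ne'
  have hA : A = qPoch q (a * q) i / qPoch q q i := sum_pow_mul_qPoch_div_qPoch a hqi
  have hB : (1 - a * q) * B = q * (1 - a) * (1 - q ^ i) * qPoch q (a * q) i / qPoch q q i :=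
    one_sub_mul_sum_pow_mul_one_sub_pow_mul_qPoch_div_qPoch a hqi
  have hT₀ : (b - a * b * q) * T₀
      = qPoch q (a * b) (n + 1) * (q - b * q ^ (n + 1)) / qPoch q b (n + 1) - (q - b) :=
    sub_mul_sum_pow_mul_qPoch_div_qPoch b (a * b) hbn
  have hT₁ : (b - a * b) * T₁ = qPoch q (a * b) (n + 1) / qPoch q b (n + 1) - 1 :=
    sub_mul_sum_pow_mul_qPoch_div_qPoch_succ b (a * b) hbn
  -- `hT₁` carries no information when `a = 1`, but then `hB` forces `B = 0`.
  have key : b * (1 - a * q) * (A * T₀ - B * T₁)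
      = b * (1 - q ^ (1 + n)) * A * (qPoch q (a * b) (n + 1) / qPoch q b (n + 1)) := by
    rw [hA]
    linear_combination qPoch q (a * q) i / qPoch q q i * hT₀ - b * T₁ * hB
      - q * (1 - q ^ i) * qPoch q (a * q) i / qPoch q q i * hT₁
  have hnum : qPoch q (a * q ^ 2) (n + i)
      = qPoch q (a * q) i * qPoch q (a * b) (n + 1) / (1 - a * q) := by
    rw [eq_div_iff haq', mul_comm, sq, ← mul_assoc, one_sub_mul_qPoch_add, hb]
    ring_nf
  have hden : qPoch q q (n + i) = qPoch q q i * qPoch q b (n + 1) / (1 - q ^ (1 + n + i)) := by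
    rw [eq_div_iff hni]
    convert qPoch_add_mul_one_sub q q i n using 3 <;> ring
  rw [hnum, hden]
  have hb0 : b ≠ 0 := pow_ne_zero _ hq.ne'
  refine mul_left_cancel₀ (mul_ne_zero hb0 haq') ?_
  rw [key, hA]
  field_simp

/-- for fixed nonnegative integer i, integer j ≥ 1 and every n ≥ 0,
`∑_{k=0}^{i} q^{2k} (q^{j-1};q)_k/(q;q)_k
   (∑_{λ=0}^{n} q^λ (q^{j+i};q)_λ/(q^{1+i};q)_λ (1-q^{1+i+λ-k})/(1-q^{1+i+λ}))
 = (q^{1+j};q)_{n+i}/(q;q)_{n+i} · (1-q^{1+n})/(1-q^{1+n+i})`. -/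
theorem double_finite_sum (q : ℝ) (hq : 0 < q) (hq1 : q < 1) (i j : ℕ) (hj : 1 ≤ j) (n : ℕ) :
    ∑ k ∈ Finset.range (i + 1),
        q ^ (2 * k) * qPoch q (q ^ (j - 1)) k / qPoch q q k *
          (∑ lam ∈ Finset.range (n + 1),
            q ^ lam * qPoch q (q ^ (j + i)) lam / qPoch q (q ^ (1 + i)) lam *
              ((1 - q ^ (1 + i + lam - k)) / (1 - q ^ (1 + i + lam))))
      = qPoch q (q ^ (1 + j)) (n + i) / qPoch q q (n + i) *
          ((1 - q ^ (1 + n)) / (1 - q ^ (1 + n + i))) := by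
  have hji : q ^ (j + i) = q ^ (j - 1) * q ^ (1 + i) := by rw [← pow_add]; congr 1; omega
  have hj1 : q ^ (1 + j) = q ^ (j - 1) * q ^ 2 := by rw [← pow_add]; congr 1; omega
  have hjq : q ^ (j - 1) * q ≠ 1 := by
    rw [pow_sub_one_mul (by omega)]
    exact (pow_lt_one₀ hq.le hq1 (by omega)).ne
  rw [hji, hj1]
  exact double_sum_qPoch_eq hq hq1 _ hjq i n
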